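/- Let G be a graph with spanning tree T and let e, f be edges of T such that e ∈ T_f (e lies in the subtree below f). Then cut(e,f) = w(T_e) + w(T_f) - 2·w(T_e, V \ T_f). -/
import Mathlib


open Finset

/-- Total weight of edges of a weighted graph `w` with one endpoint in `A`
and the other in `B`. -/
def interWeight {V : Type*} (w : V → V → ℝ) (A B : Finset V) : ℝ :=
  ∑ u ∈ A, ∑ v ∈ B, w u v

lemma interWeight_union_left {V : Type*} [DecidableEq V] (w : V → V → ℝ)
    (X Y Z : Finset V) (h : Disjoint X Y) :
    interWeight w (X ∪ Y) Z = interWeight w X Z + interWeight w Y Z := by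
  simp [interWeight, Finset.sum_union h]

lemma interWeight_union_right {V : Type*} [DecidableEq V] (w : V → V → ℝ)
    (X Y Z : Finset V) (h : Disjoint Y Z) :
    interWeight w X (Y ∪ Z) = interWeight w X Y + interWeight w X Z := by
  simp [interWeight, Finset.sum_union h, Finset.sum_add_distrib]

lemma interWeight_comm {V : Type*} (w : V → V → ℝ)
    (hsymm : ∀ u v, w u v = w v u) (A B : Finset V) :
    interWeight w A B = interWeight w B A := by
  unfold interWeight
  rw [Finset.sum_comm]
  simp_rw [hsymm]

/-- For tree edges `e ∈ T_f` (so `T_e ⊆ T_f`), the 2-respecting cut determined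
by `e` and `f`, whose sides are `T_e ∪ (V \ T_f)` and `T_f \ T_e`, has weight
`w(T_e) + w(T_f) - 2 w(T_e, V \ T_f)`. -/
theorem cut_two_respecting_nested {V : Type*} [Fintype V] [DecidableEq V]
    (w : V → V → ℝ) (hsymm : ∀ u v, w u v = w v u) (hnonneg : ∀ u v, 0 ≤ w u v)
    (hloop : ∀ u, w u u = 0)
    (Te Tf : Finset V) (hsub : Te ⊆ Tf) :
    interWeight w (Te ∪ Tfᶜ) (Te ∪ Tfᶜ)ᶜ =
      interWeight w Te Teᶜ + interWeight w Tf Tfᶜ - 2 * interWeight w Te Tfᶜ := by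
  set B := Tf \ Te with hB
  have hcompl : (Te ∪ Tfᶜ)ᶜ = B := by
    ext x; simp [hB, Finset.mem_compl, Finset.mem_sdiff]; tauto
  have hTec : Teᶜ = B ∪ Tfᶜ := by
    ext x
    simp only [Finset.mem_compl, Finset.mem_union, hB, Finset.mem_sdiff]
    constructor
    · intro hx
      by_cases hxf : x ∈ Tf
      · exact Or.inl ⟨hxf, hx⟩
      · exact Or.inr hxf
    · rintro (⟨_, hx⟩ | hx)
      · exact hx
      · exact fun hxe => hx (hsub hxe)
  have hTf : Tf = Te ∪ B := by
    ext x; simp [hB, Finset.mem_sdiff]; tauto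
  have hd1 : Disjoint Te Tfᶜ := Disjoint.mono_left hsub disjoint_compl_right
  have hd2 : Disjoint B Tfᶜ := Disjoint.mono_left Finset.sdiff_subset disjoint_compl_right
  have hd3 : Disjoint Te B := Finset.disjoint_sdiff
  have h4 : interWeight w Tf Tfᶜ = interWeight w Te Tfᶜ + interWeight w B Tfᶜ := by
    nth_rewrite 1 [hTf]; rw [interWeight_union_left w Te B Tfᶜ hd3]
  rw [hcompl, interWeight_union_left w Te Tfᶜ B hd1,
    hTec, interWeight_union_right w Te B Tfᶜ hd2, h4,
    interWeight_comm w hsymm Tfᶜ B]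
  ring
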